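/- arXiv:2504.18699 — 3 statements merged into one kernel-verified Lean document; each statement's English description precedes it below -/
import Mathlib

section
/- Let f : ℝ → ℂ be a 2π-periodic function of class C^∞ and let (g_n)_{n∈ℤ} be complex numbers with |g_n| ≤ M for all n and some constant M. For a positive integer F set g_F(x) := Σ_{|n|≤F} g_n e^{i n x} and N = 2F. Then for every natural number p there exists a constant C > 0 such that for all positive integers F, | ∫_{-π}^{π} f(x) g_F(x) dx − Q_{2F}[ f · g_F ] | ≤ C · F^{-p}. -/
open Real

set_option maxHeartbeats 1000000

lemma geom_exp (N : ℕ) (hN : 0 < N) (m : ℤ) (hm : ¬ ((N:ℤ) ∣ m)) :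
    ∑ j ∈ Finset.range N, Complex.exp (2 * π * Complex.I * m * j / N) = 0 := by
  have hz : ∀ j : ℕ, Complex.exp (2 * π * Complex.I * m * j / N)
      = Complex.exp (2 * π * Complex.I * m / N) ^ j := by
    intro j
    rw [← Complex.exp_nat_mul]
    congr 1; ring
  simp_rw [hz]
  have hπ : (π : ℂ) ≠ 0 := Complex.ofReal_ne_zero.mpr Real.pi_ne_zero
  have hNne : (N : ℂ) ≠ 0 := Nat.cast_ne_zero.mpr hN.ne'
  have hζ1 : Complex.exp (2 * π * Complex.I * m / N) ≠ 1 := by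
    intro h
    rw [Complex.exp_eq_one_iff] at h
    obtain ⟨k, hk⟩ := h
    apply hm
    refine ⟨k, ?_⟩
    have h0 : (2 * ↑π * Complex.I : ℂ) ≠ 0 := by
      simp [hπ, Complex.I_ne_zero]
    have : (m : ℂ) = N * k := by
      field_simp at hk
      apply mul_left_cancel₀ h0
      linear_combination (2 * ↑π * Complex.I) * hk
    exact_mod_cast this
  rw [geom_sum_eq hζ1]
  have : Complex.exp (2 * π * Complex.I * m / N) ^ N = 1 := by
    rw [← Complex.exp_nat_mul]
    rw [show (N : ℂ) * (2 * π * Complex.I * m / N) = m * (2 * π * Complex.I) by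
      field_simp]
    exact Complex.exp_int_mul_two_pi_mul_I m
  rw [this]
  simp

lemma quad_exact (N : ℕ) (hN : 0 < N) (k : ℤ) (hk : k.natAbs < N) :
    ∫ x in (-π)..π, Complex.exp (Complex.I * k * x) =
      (2 * (π:ℂ) / N) * ∑ j ∈ Finset.range N,
        Complex.exp (Complex.I * k * (-(π:ℂ) + 2 * π * j / N)) := by
  have hNne : (N : ℂ) ≠ 0 := Nat.cast_ne_zero.mpr hN.ne'
  rcases eq_or_ne k 0 with rfl | hk0
  · simp only [Int.cast_zero, mul_zero, zero_mul, Complex.exp_zero]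
    rw [intervalIntegral.integral_const]
    simp only [Finset.sum_const, Finset.card_range, nsmul_eq_mul, mul_one]
    have : ((π : ℝ) - -π) • (1:ℂ) = ((2:ℂ) * π) := by
      rw [Complex.real_smul]; push_cast; ring
    rw [this]
    field_simp
  · have hc : (Complex.I * k : ℂ) ≠ 0 := by
      simp [Complex.I_ne_zero, Int.cast_ne_zero, hk0]
    rw [integral_exp_mul_complex hc]
    have hnum : Complex.exp (Complex.I * k * (π:ℝ)) - Complex.exp (Complex.I * k * ((-π : ℝ):ℂ)) = 0 := by
      have : Complex.I * k * ((π:ℝ):ℂ) = Complex.I * k * ((-π:ℝ):ℂ) + k * (2*π*Complex.I) := by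
        push_cast; ring
      rw [this, Complex.exp_add, Complex.exp_int_mul_two_pi_mul_I, mul_one, sub_self]
    rw [hnum]
    have hsplit : ∀ j : ℕ, Complex.exp (Complex.I * k * (-(π:ℂ) + 2 * π * j / N))
        = Complex.exp (Complex.I * k * (-(π:ℂ))) * Complex.exp (2 * π * Complex.I * k * j / N) := by
      intro j
      rw [← Complex.exp_add]
      congr 1
      field_simp
    simp_rw [hsplit]
    rw [← Finset.mul_sum, geom_exp N hN k]
    · ring
    · intro hdvd
      have h1 : N ∣ k.natAbs := Int.natCast_dvd_natCast.mp (Int.dvd_natAbs.mpr hdvd)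
      have h2 : k.natAbs ≠ 0 := Int.natAbs_ne_zero.mpr hk0
      have := Nat.le_of_dvd (Nat.pos_of_ne_zero h2) h1
      omega

lemma per_deriv {f : ℝ → ℂ} {c : ℝ} (h : Function.Periodic f c) :
    Function.Periodic (deriv f) c := by
  intro x
  have : deriv f (x + c) = deriv (fun y => f (y + c)) x := (deriv_comp_add_const f c x).symm
  rw [this]
  congr 1
  funext y
  exact h y

lemma exp_norm_one (n : ℤ) (x : ℝ) : ‖Complex.exp (-(Complex.I * n) * x)‖ = 1 := by
  rw [Complex.norm_exp]
  simp

lemma hasDerivAt_cexp_mul (c : ℂ) (x : ℝ) :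
    HasDerivAt (fun y : ℝ => Complex.exp (c * y)) (c * Complex.exp (c * x)) x := by
  have h1 : HasDerivAt (fun y : ℝ => c * (y : ℂ)) c x := by
    simpa using (Complex.ofRealCLM.hasDerivAt (x := x)).const_mul c
  simpa [mul_comm] using h1.cexp

lemma coeff_decay (q : ℕ) : ∀ (f : ℝ → ℂ), ContDiff ℝ (⊤:ℕ∞) f → Function.Periodic f (2*π) →
    ∃ B, 0 ≤ B ∧ ∀ n : ℤ, n ≠ 0 →
      ‖∫ x in (-π)..π, f x * Complex.exp (-(Complex.I * n) * x)‖ ≤ B / |(n:ℝ)|^q := by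
  induction q with
  | zero =>
    intro f hf _
    obtain ⟨C, hC⟩ := (isCompact_Icc (a := -π) (b := π)).exists_bound_of_continuousOn
      (hf.continuous.continuousOn)
    refine ⟨(max C 0) * (2*π), by positivity, fun n _ => ?_⟩
    have h1 : ‖∫ x in (-π)..π, f x * Complex.exp (-(Complex.I * n) * x)‖ ≤ (max C 0) * |π - -π| := by
      apply intervalIntegral.norm_integral_le_of_norm_le_const
      intro x hx
      have hx' : x ∈ Set.Icc (-π) π := by
        rw [Set.uIoc_of_le (by linarith [pi_pos] : -π ≤ π)] at hx
        exact Set.mem_Icc_of_Ioc hx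
      rw [norm_mul, exp_norm_one, mul_one]
      exact le_trans (hC x hx') (le_max_left _ _)
    have habs : |π - -π| = 2*π := by
      rw [abs_of_nonneg (by linarith [pi_pos])]; ring
    rw [habs] at h1
    simpa using h1
  | succ q ih =>
    intro f hf hper
    obtain ⟨B, hB0, hB⟩ := ih (deriv f) (contDiff_infty_iff_deriv.mp hf).2 (per_deriv hper)
    refine ⟨B, hB0, fun n hn => ?_⟩
    set c : ℂ := -(Complex.I * n) with hc
    have hcne : c ≠ 0 := by
      simp [hc, Complex.I_ne_zero, Complex.ext_iff, Int.cast_ne_zero, hn]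
    have hu : ∀ x ∈ Set.uIcc (-π) π, HasDerivAt f (deriv f x) x :=
      fun x _ => (hf.differentiable (by simp) x).hasDerivAt
    have hv : ∀ x ∈ Set.uIcc (-π) π,
        HasDerivAt (fun y : ℝ => Complex.exp (c * y) / c) (Complex.exp (c * x)) x := by
      intro x _
      have := (hasDerivAt_cexp_mul c x).div_const c
      rwa [mul_div_cancel_left₀ _ hcne] at this
    have hu' : IntervalIntegrable (deriv f) MeasureTheory.volume (-π) π :=
      ((hf.continuous_deriv (by exact_mod_cast le_top)).intervalIntegrable _ _)
    have hv' : IntervalIntegrable (fun x : ℝ => Complex.exp (c * x)) MeasureTheory.volume (-π) π :=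
      (Continuous.intervalIntegrable (by continuity) _ _)
    have key := intervalIntegral.integral_mul_deriv_eq_deriv_mul hu hv hu' hv'
    have hbd : f π * (Complex.exp (c * (π:ℝ)) / c) - f (-π) * (Complex.exp (c * ((-π:ℝ):ℂ)) / c) = 0 := by
      have hf2 : f π = f (-π) := by
        have := hper (-π)
        rw [show -π + 2*π = π by ring] at this
        exact this
      have he : Complex.exp (c * (π:ℝ)) = Complex.exp (c * ((-π:ℝ):ℂ)) := by
        rw [show c * ((π:ℝ):ℂ) = c * ((-π:ℝ):ℂ) + ((-n : ℤ) : ℂ) * (2*π*Complex.I) by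
          rw [hc]; push_cast; ring]
        rw [Complex.exp_add, Complex.exp_int_mul_two_pi_mul_I, mul_one]
      rw [hf2, he, sub_self]
    rw [hbd, zero_sub] at key
    have key2 : ∫ x in (-π)..π, f x * Complex.exp (c * x)
        = -(1/c) * ∫ x in (-π)..π, deriv f x * Complex.exp (c * x) := by
      rw [key]
      rw [← intervalIntegral.integral_const_mul]
      rw [← intervalIntegral.integral_neg]
      congr 1; funext x; simp only [div_eq_mul_inv, one_div]; ring
    rw [key2, norm_mul]
    have hcnorm : ‖-(1/c)‖ = 1 / |(n:ℝ)| := by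
      rw [norm_neg, norm_div, norm_one, hc, norm_neg, norm_mul, Complex.norm_I, one_mul]
      simp
    rw [hcnorm]
    have := hB n hn
    have hnpos : (0:ℝ) < |(n:ℝ)| := by
      simp [abs_pos, Int.cast_ne_zero, hn]
    calc 1 / |(n:ℝ)| * ‖∫ x in (-π)..π, deriv f x * Complex.exp (c * x)‖
        ≤ 1 / |(n:ℝ)| * (B / |(n:ℝ)|^q) := by
          apply mul_le_mul_of_nonneg_left this (by positivity)
      _ = B / |(n:ℝ)|^(q+1) := by
          rw [div_mul_div_comm, one_mul, pow_succ, mul_comm]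

lemma quad_exact' (F : ℕ) (hF : 0 < F) (k : ℤ) (hk : k.natAbs < 2*F) :
    ∫ x in (-π)..π, Complex.exp (Complex.I * k * x) =
      (2 * (π:ℂ) / (2*(F:ℂ))) * ∑ j ∈ Finset.range (2*F),
        Complex.exp (Complex.I * k * (((-π + 2*π*j/(2*F) : ℝ)) : ℂ)) := by
  rw [quad_exact (2*F) (by omega) k hk]
  congr 1
  · push_cast; ring
  · apply Finset.sum_congr rfl
    intro j _
    congr 1
    push_cast
    ring

lemma exact_SG (F : ℕ) (hF : 0 < F) (c g : ℤ → ℂ) :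
    ∫ x in (-π)..π, (∑ m ∈ Finset.Ioo (-(F:ℤ)) (F:ℤ), c m * Complex.exp (Complex.I * m * x)) *
        (∑ n ∈ Finset.Icc (-(F:ℤ)) (F:ℤ), g n * Complex.exp (Complex.I * n * x))
      = (2 * (π:ℂ) / (2*(F:ℂ))) * ∑ j ∈ Finset.range (2*F),
          ((∑ m ∈ Finset.Ioo (-(F:ℤ)) (F:ℤ), c m * Complex.exp (Complex.I * m * ((-π + 2*π*j/(2*F) : ℝ) : ℂ))) *
          (∑ n ∈ Finset.Icc (-(F:ℤ)) (F:ℤ), g n * Complex.exp (Complex.I * n * ((-π + 2*π*j/(2*F) : ℝ) : ℂ)))) := by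
  have hexp : ∀ (m n : ℤ) (z : ℂ), (c m * Complex.exp (Complex.I*m*z)) * (g n * Complex.exp (Complex.I*n*z))
      = (c m * g n) * Complex.exp (Complex.I*((m+n:ℤ))*z) := by
    intro m n z
    have h : Complex.exp (Complex.I*m*z) * Complex.exp (Complex.I*n*z)
        = Complex.exp (Complex.I*((m+n:ℤ))*z) := by
      rw [← Complex.exp_add]; congr 1; push_cast; ring
    rw [mul_mul_mul_comm, h]
  have hprod : ∀ z : ℂ,
      (∑ m ∈ Finset.Ioo (-(F:ℤ)) (F:ℤ), c m * Complex.exp (Complex.I * m * z)) *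
      (∑ n ∈ Finset.Icc (-(F:ℤ)) (F:ℤ), g n * Complex.exp (Complex.I * n * z))
      = ∑ q ∈ (Finset.Ioo (-(F:ℤ)) (F:ℤ)) ×ˢ (Finset.Icc (-(F:ℤ)) (F:ℤ)),
          (c q.1 * g q.2) * Complex.exp (Complex.I*((q.1+q.2:ℤ))*z) := by
    intro z
    rw [Finset.sum_mul_sum, Finset.sum_product]
    exact Finset.sum_congr rfl fun m _ => Finset.sum_congr rfl fun n _ => hexp m n z
  have hcont : ∀ k : ℤ, Continuous fun x : ℝ => Complex.exp (Complex.I * k * x) :=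
    fun k => Complex.continuous_exp.comp ((continuous_const).mul Complex.continuous_ofReal)
  calc ∫ x in (-π)..π, (∑ m ∈ Finset.Ioo (-(F:ℤ)) (F:ℤ), c m * Complex.exp (Complex.I * m * x)) *
        (∑ n ∈ Finset.Icc (-(F:ℤ)) (F:ℤ), g n * Complex.exp (Complex.I * n * x))
      = ∫ x in (-π)..π, ∑ q ∈ (Finset.Ioo (-(F:ℤ)) (F:ℤ)) ×ˢ (Finset.Icc (-(F:ℤ)) (F:ℤ)),
          (c q.1 * g q.2) * Complex.exp (Complex.I*((q.1+q.2:ℤ))*x) := by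
        apply intervalIntegral.integral_congr
        intro x _
        exact hprod x
    _ = ∑ q ∈ (Finset.Ioo (-(F:ℤ)) (F:ℤ)) ×ˢ (Finset.Icc (-(F:ℤ)) (F:ℤ)),
          ∫ x in (-π)..π, (c q.1 * g q.2) * Complex.exp (Complex.I*((q.1+q.2:ℤ))*x) := by
        apply intervalIntegral.integral_finset_sum
        intro q _
        exact (Continuous.intervalIntegrable (by continuity) _ _)
    _ = ∑ q ∈ (Finset.Ioo (-(F:ℤ)) (F:ℤ)) ×ˢ (Finset.Icc (-(F:ℤ)) (F:ℤ)),
          (c q.1 * g q.2) * ((2 * (π:ℂ) / (2*(F:ℂ))) * ∑ j ∈ Finset.range (2*F),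
            Complex.exp (Complex.I * ((q.1+q.2 : ℤ) : ℂ) * (((-π + 2*π*j/(2*F) : ℝ)) : ℂ))) := by
        apply Finset.sum_congr rfl
        intro q hq
        rw [intervalIntegral.integral_const_mul]
        congr 1
        apply quad_exact' F hF
        simp only [Finset.mem_product, Finset.mem_Ioo, Finset.mem_Icc] at hq
        omega
    _ = (2 * (π:ℂ) / (2*(F:ℂ))) * ∑ j ∈ Finset.range (2*F),
          ∑ q ∈ (Finset.Ioo (-(F:ℤ)) (F:ℤ)) ×ˢ (Finset.Icc (-(F:ℤ)) (F:ℤ)),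
            (c q.1 * g q.2) * Complex.exp (Complex.I*((q.1+q.2:ℤ))*(((-π + 2*π*j/(2*F) : ℝ)) : ℂ)) := by
        simp_rw [Finset.mul_sum]
        rw [Finset.sum_comm]
        exact Finset.sum_congr rfl fun j _ => Finset.sum_congr rfl fun q _ => by ring
    _ = (2 * (π:ℂ) / (2*(F:ℂ))) * ∑ j ∈ Finset.range (2*F),
          ((∑ m ∈ Finset.Ioo (-(F:ℤ)) (F:ℤ), c m * Complex.exp (Complex.I * m * ((-π + 2*π*j/(2*F) : ℝ) : ℂ))) *
          (∑ n ∈ Finset.Icc (-(F:ℤ)) (F:ℤ), g n * Complex.exp (Complex.I * n * ((-π + 2*π*j/(2*F) : ℝ) : ℂ)))) := by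
        congr 1
        apply Finset.sum_congr rfl
        intro j _
        exact (hprod _).symm

lemma exp_norm_one' (k : ℤ) (x : ℝ) : ‖Complex.exp (Complex.I * k * x)‖ = 1 := by
  rw [Complex.norm_exp]
  simp

lemma fact2pi : Fact (0 < 2*π) := ⟨by linarith [pi_pos]⟩

lemma fourier_eq (n : ℤ) (x : ℝ) :
    (fourier n (x : AddCircle (2*π)) : ℂ) = Complex.exp (Complex.I * n * x) := by
  rw [fourier_coe_apply]
  congr 1
  have h2π : ((2*π:ℝ):ℂ) ≠ 0 := by
    simp only [ne_eq, Complex.ofReal_eq_zero]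
    positivity
  rw [div_eq_iff h2π]
  push_cast
  ring

lemma tail_main (f : ℝ → ℂ) (hf : ContDiff ℝ (⊤:ℕ∞) f)
    (hper : Function.Periodic f (2*π)) (p : ℕ) :
    ∃ (c : ℤ → ℂ) (D : ℝ), 0 ≤ D ∧ ∀ F : ℕ, 0 < F → ∀ x : ℝ,
      ‖f x - ∑ m ∈ Finset.Ioo (-(F:ℤ)) (F:ℤ), c m * Complex.exp (Complex.I * m * x)‖
        ≤ D / (F:ℝ)^(p+1) := by
  haveI : Fact (0 < 2*π) := fact2pi
  have hcont : Continuous (hper.lift) := hf.continuous.quotient_liftOn' _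
  set fc : C(AddCircle (2*π), ℂ) := ⟨hper.lift, hcont⟩ with hfc
  set c : ℤ → ℂ := fourierCoeff (⇑fc) with hcdef
  -- coefficient formula
  have hco : ∀ n : ℤ, c n
      = (1/(2*π):ℝ) • ∫ x in (-π)..π, f x * Complex.exp (-(Complex.I*n)*x) := by
    intro n
    rw [hcdef, fourierCoeff_eq_intervalIntegral _ n (-π), show -π + 2*π = π by ring]
    congr 1
    apply intervalIntegral.integral_congr
    intro x _
    show (fourier (-n) (x : AddCircle (2*π)) : ℂ) • fc (x : AddCircle (2*π)) = _
    have hl : fc (x : AddCircle (2*π)) = f x := hper.lift_coe x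
    rw [smul_eq_mul, hl, fourier_eq, mul_comm]
    congr 1
    push_cast
    ring
  -- decay bounds
  have decay : ∀ q : ℕ, ∃ B, 0 ≤ B ∧ ∀ n : ℤ, n ≠ 0 → ‖c n‖ ≤ B / |(n:ℝ)|^q := by
    intro q
    obtain ⟨B, hB0, hB⟩ := coeff_decay q f hf hper
    refine ⟨B / (2*π), by positivity, fun n hn => ?_⟩
    rw [hco n, norm_smul, Real.norm_eq_abs, abs_of_pos (by positivity : (0:ℝ) < 1/(2*π))]
    calc 1/(2*π) * ‖∫ x in (-π)..π, f x * Complex.exp (-(Complex.I*n)*x)‖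
        ≤ 1/(2*π) * (B / |(n:ℝ)|^q) :=
          mul_le_mul_of_nonneg_left (hB n hn) (by positivity)
      _ = B / (2*π) / |(n:ℝ)|^q := by ring
  -- summability
  obtain ⟨B2, hB20, hB2⟩ := decay 2
  have hZs : Summable (fun m : ℤ => 1 / (m:ℝ)^2) := summable_one_div_int_pow.mpr one_lt_two
  have hsumm : Summable c := by
    apply Summable.of_norm_bounded_eventually (g := fun m : ℤ => B2 * (1/(m:ℝ)^2)) (hZs.mul_left B2)
    rw [Filter.eventually_cofinite]
    apply Set.Finite.subset (Set.finite_singleton 0)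
    intro n hn
    simp only [Set.mem_setOf_eq, not_le] at hn
    simp only [Set.mem_singleton_iff]
    by_contra h0
    have := hB2 n h0
    have heq : B2 / |(n:ℝ)|^2 = B2 * (1/(n:ℝ)^2) := by
      rw [sq_abs]; ring
    rw [heq] at this
    exact absurd this (not_le.mpr hn)
  obtain ⟨B, hB0, hB⟩ := decay (p+3)
  set Z : ℝ := ∑' m : ℤ, 1 / (m:ℝ)^2 with hZ
  have hZ0 : 0 ≤ Z := tsum_nonneg (fun m => by positivity)
  refine ⟨c, (B) * Z, by positivity, ?_⟩
  intro F hF x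
  -- pointwise Fourier series
  have hs0 := has_pointwise_sum_fourier_series_of_summable (f := fc) hsumm (x : AddCircle (2*π))
  have hs : HasSum (fun m : ℤ => c m * Complex.exp (Complex.I * m * x)) (f x) := by
    have hl : fc (x : AddCircle (2*π)) = f x := hper.lift_coe x
    rw [hl] at hs0
    convert hs0 using 2 with m
    rw [smul_eq_mul, fourier_eq]
  set s : Finset ℤ := Finset.Ioo (-(F:ℤ)) (F:ℤ) with hsdef
  set t : ℤ → ℂ := fun m => c m * Complex.exp (Complex.I * m * x) with ht
  have hts : Summable t := hs.summable
  have htn : Summable (fun m => ‖t m‖) := summable_norm_iff.mpr hts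
  have hsplit := Summable.sum_add_tsum_compl (s := s) hts
  rw [hs.tsum_eq] at hsplit
  have htail : f x - ∑ m ∈ s, t m = ∑' m : ((s : Set ℤ)ᶜ : Set ℤ), t m := by
    rw [← hsplit]; ring
  rw [htail]
  -- bound the tail
  have hnorm : ∀ m : ℤ, ‖t m‖ = ‖c m‖ := by
    intro m; rw [ht]; rw [norm_mul, exp_norm_one' m x, mul_one]
  have hmem : ∀ m : ℤ, m ∈ ((s : Set ℤ)ᶜ : Set ℤ) → ‖c m‖ ≤ B / (F:ℝ)^(p+1) * (1/(m:ℝ)^2) := by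
    intro m hm
    have hm' : ¬ (-(F:ℤ) < m ∧ m < F) := by
      simpa [hsdef] using hm
    have hFZ : (0:ℤ) < (F:ℤ) := by exact_mod_cast hF
    have hcase : m ≤ -(F:ℤ) ∨ (F:ℤ) ≤ m := by omega
    have hm0 : m ≠ 0 := by omega
    have hmabs : (F:ℝ) ≤ |(m:ℝ)| := by
      rcases hcase with h | h
      · exact le_abs.mpr (Or.inr (by exact_mod_cast (by omega : (F:ℤ) ≤ -m)))
      · exact le_abs.mpr (Or.inl (by exact_mod_cast h))
    have h1 := hB m hm0
    have hmpos : (0:ℝ) < |(m:ℝ)| := by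
      simp [abs_pos, Int.cast_ne_zero, hm0]
    have hFpos : (0:ℝ) < (F:ℝ) := by exact_mod_cast hF
    calc ‖c m‖ ≤ B / |(m:ℝ)|^(p+3) := h1
      _ = B / (|(m:ℝ)|^(p+1) * |(m:ℝ)|^2) := by rw [← pow_add]
      _ ≤ B / ((F:ℝ)^(p+1) * |(m:ℝ)|^2) := by
          have hle : (F:ℝ)^(p+1) ≤ |(m:ℝ)|^(p+1) := pow_le_pow_left₀ hFpos.le hmabs _
          gcongr
      _ = B / (F:ℝ)^(p+1) * (1/(m:ℝ)^2) := by
          rw [sq_abs]; ring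
  calc ‖∑' m : ((s : Set ℤ)ᶜ : Set ℤ), t m‖
      ≤ ∑' m : ((s : Set ℤ)ᶜ : Set ℤ), ‖t m‖ := norm_tsum_le_tsum_norm (htn.subtype _)
    _ ≤ ∑' m : ((s : Set ℤ)ᶜ : Set ℤ), (B / (F:ℝ)^(p+1) * (1/((m:ℤ):ℝ)^2)) := by
        apply Summable.tsum_le_tsum
        · intro m
          rw [hnorm m]
          exact hmem m m.2
        · exact htn.subtype _
        · exact ((hZs.mul_left _).subtype _)
    _ = B / (F:ℝ)^(p+1) * ∑' m : ((s : Set ℤ)ᶜ : Set ℤ), (1/((m:ℤ):ℝ)^2) := tsum_mul_left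
    _ ≤ B / (F:ℝ)^(p+1) * Z := by
        apply mul_le_mul_of_nonneg_left _ (by positivity)
        apply Summable.tsum_le_tsum_of_inj (Subtype.val) (Subtype.val_injective)
          (fun m _ => by positivity) (fun m => le_refl _) (hZs.subtype _) hZs
    _ = B * Z / (F:ℝ)^(p+1) := by ring

/-- Trapezoidal-rule error for a smooth function times a trigonometric polynomial:
for `f` smooth `2π`-periodic and bounded coefficients `(g_n)`, with
`g_F(x) = ∑_{|n|≤F} g_n e^{inx}` and `N = 2F`, for every `p` there is `C > 0` with
`|∫_{-π}^{π} f g_F − Q_{2F}[f ⬝ g_F]| ≤ C F^{-p}` for all positive integers `F`. -/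
theorem stmt5 (f : ℝ → ℂ) (hf : ContDiff ℝ (⊤ : ℕ∞) f)
    (hfper : Function.Periodic f (2 * π))
    (g : ℤ → ℂ) (M : ℝ) (hg : ∀ n : ℤ, ‖g n‖ ≤ M) (p : ℕ) :
    ∃ C > 0, ∀ F : ℕ, 0 < F →
      ‖(∫ x in (-π)..π,
            f x * ∑ n ∈ Finset.Icc (-(F : ℤ)) (F : ℤ),
              g n * Complex.exp (Complex.I * n * x)) -
          (2 * (π : ℂ) / (2 * F)) * ∑ j ∈ Finset.range (2 * F),
            (f (-π + 2 * π * j / (2 * F)) *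
              ∑ n ∈ Finset.Icc (-(F : ℤ)) (F : ℤ),
                g n * Complex.exp (Complex.I * n * (-π + 2 * π * j / (2 * F))))‖
        ≤ C / (F : ℝ) ^ p := by
  have hf' : ContDiff ℝ (⊤:ℕ∞) f := hf.of_le (by simp)
  obtain ⟨c, D, hD0, htail⟩ := tail_main f hf' hfper p
  have hM0 : 0 ≤ M := le_trans (norm_nonneg _) (hg 0)
  refine ⟨12*π*M*D + 1, by positivity, ?_⟩
  intro F hF
  set A : Finset ℤ := Finset.Icc (-(F:ℤ)) (F:ℤ) with hA
  have hFR : (0:ℝ) < (F:ℝ) := by exact_mod_cast hF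
  set G : ℝ → ℂ := fun x => ∑ n ∈ A, g n * Complex.exp (Complex.I * n * x) with hG
  set S : ℝ → ℂ := fun x => ∑ m ∈ Finset.Ioo (-(F:ℤ)) (F:ℤ),
      c m * Complex.exp (Complex.I * m * x) with hS
  set node : ℕ → ℝ := fun j => -π + 2*π*j/(2*F) with hnode
  have hScont : Continuous S := by
    rw [hS]
    apply continuous_finset_sum
    intro m _
    exact continuous_const.mul
      (Complex.continuous_exp.comp (continuous_const.mul Complex.continuous_ofReal))
  have hGcont : Continuous G := by
    rw [hG]
    apply continuous_finset_sum
    intro n _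
    exact continuous_const.mul
      (Complex.continuous_exp.comp (continuous_const.mul Complex.continuous_ofReal))
  -- rewrite quadrature inner sums as G (node j)
  have hQnode : ∀ j : ℕ,
      (∑ n ∈ A, g n * Complex.exp (Complex.I * n * (-(π:ℂ) + 2 * π * (j:ℂ) / (2 * (F:ℂ)))))
        = G (node j) := by
    intro j
    rw [hG]
    apply Finset.sum_congr rfl
    intro n _
    congr 1
    congr 1
    rw [hnode]
    push_cast
    ring
  have hmain :
      (∫ x in (-π)..π, f x * ∑ n ∈ A, g n * Complex.exp (Complex.I * n * x)) -
          (2 * (π : ℂ) / (2 * F)) * ∑ j ∈ Finset.range (2 * F),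
            (f (node j) * ∑ n ∈ A, g n * Complex.exp (Complex.I * n * (-(π:ℂ) + 2 * π * (j:ℂ) / (2 * (F:ℂ)))))
      = (∫ x in (-π)..π, (f x - S x) * G x) -
          (2 * (π : ℂ) / (2 * F)) * ∑ j ∈ Finset.range (2 * F), (f (node j) - S (node j)) * G (node j) := by
    have hsplitI : (∫ x in (-π)..π, f x * ∑ n ∈ A, g n * Complex.exp (Complex.I * n * x))
        = (∫ x in (-π)..π, (f x - S x) * G x) + ∫ x in (-π)..π, S x * G x := by
      rw [← intervalIntegral.integral_add]
      · apply intervalIntegral.integral_congr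
        intro x _
        show f x * G x = _
        ring
      · exact (Continuous.intervalIntegrable ((hf.continuous.sub hScont).mul hGcont) _ _)
      · exact (Continuous.intervalIntegrable (hScont.mul hGcont) _ _)
    have hexact : (∫ x in (-π)..π, S x * G x)
        = (2 * (π:ℂ) / (2*(F:ℂ))) * ∑ j ∈ Finset.range (2*F), S (node j) * G (node j) := by
      have := exact_SG F hF c g
      exact this
    have hsplitQ : ∑ j ∈ Finset.range (2 * F), (f (node j) * G (node j))
        = ∑ j ∈ Finset.range (2 * F), ((f (node j) - S (node j)) * G (node j))
          + ∑ j ∈ Finset.range (2*F), S (node j) * G (node j) := by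
      rw [← Finset.sum_add_distrib]
      apply Finset.sum_congr rfl
      intro j _
      ring
    simp_rw [hQnode]
    rw [hsplitI, hsplitQ, mul_add, hexact]
    ring
  rw [hmain]
  -- now bound the two pieces
  have hGbd : ∀ x : ℝ, ‖G x‖ ≤ (2*(F:ℝ)+1) * M := by
    intro x
    have hcard : A.card = 2*F+1 := by
      rw [hA, Int.card_Icc]
      omega
    calc ‖G x‖ ≤ ∑ n ∈ A, ‖g n * Complex.exp (Complex.I * n * x)‖ := norm_sum_le _ _
      _ = ∑ n ∈ A, ‖g n‖ := by
          apply Finset.sum_congr rfl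
          intro n _
          rw [norm_mul, exp_norm_one', mul_one]
      _ ≤ A.card • M := Finset.sum_le_card_nsmul _ _ _ (fun n _ => hg n)
      _ = (2*(F:ℝ)+1) * M := by
          rw [hcard, nsmul_eq_mul]
          push_cast
          ring
  have hrbd : ∀ x : ℝ, ‖f x - S x‖ ≤ D / (F:ℝ)^(p+1) := fun x => htail F hF x
  have hprod : ∀ x : ℝ, ‖(f x - S x) * G x‖ ≤ D / (F:ℝ)^(p+1) * ((2*(F:ℝ)+1) * M) := by
    intro x
    rw [norm_mul]
    exact mul_le_mul (hrbd x) (hGbd x) (norm_nonneg _) (by positivity)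
  have hI : ‖∫ x in (-π)..π, (f x - S x) * G x‖
      ≤ (D / (F:ℝ)^(p+1) * ((2*(F:ℝ)+1) * M)) * (2*π) := by
    have := intervalIntegral.norm_integral_le_of_norm_le_const
      (C := D / (F:ℝ)^(p+1) * ((2*(F:ℝ)+1) * M)) (a := -π) (b := π)
      (f := fun x => (f x - S x) * G x) (fun x _ => hprod x)
    rwa [show |π - -π| = 2*π by rw [abs_of_nonneg (by linarith [pi_pos])]; ring] at this
  have hQ : ‖(2 * (π : ℂ) / (2 * F)) * ∑ j ∈ Finset.range (2 * F),
      (f (node j) - S (node j)) * G (node j)‖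
      ≤ (D / (F:ℝ)^(p+1) * ((2*(F:ℝ)+1) * M)) * (2*π) := by
    rw [norm_mul]
    have hcnorm : ‖(2 * (π : ℂ) / (2 * (F:ℂ)))‖ = 2*π/(2*(F:ℝ)) := by
      rw [show (2 * (π : ℂ) / (2 * (F:ℂ))) = ((2*π/(2*(F:ℝ)) : ℝ) : ℂ) by push_cast; ring]
      rw [Complex.norm_real, Real.norm_eq_abs, abs_of_pos (by positivity)]
    rw [hcnorm]
    have hsum : ‖∑ j ∈ Finset.range (2 * F), (f (node j) - S (node j)) * G (node j)‖
        ≤ (2*(F:ℝ)) * (D / (F:ℝ)^(p+1) * ((2*(F:ℝ)+1) * M)) := by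
      calc ‖∑ j ∈ Finset.range (2 * F), (f (node j) - S (node j)) * G (node j)‖
          ≤ ∑ j ∈ Finset.range (2*F), ‖(f (node j) - S (node j)) * G (node j)‖ := norm_sum_le _ _
        _ ≤ (Finset.range (2*F)).card • (D / (F:ℝ)^(p+1) * ((2*(F:ℝ)+1) * M)) :=
            Finset.sum_le_card_nsmul _ _ _ (fun j _ => hprod _)
        _ = (2*(F:ℝ)) * (D / (F:ℝ)^(p+1) * ((2*(F:ℝ)+1) * M)) := by
            rw [Finset.card_range, nsmul_eq_mul]
            push_cast
            ring
    calc 2*π/(2*(F:ℝ)) * ‖∑ j ∈ Finset.range (2 * F), (f (node j) - S (node j)) * G (node j)‖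
        ≤ 2*π/(2*(F:ℝ)) * ((2*(F:ℝ)) * (D / (F:ℝ)^(p+1) * ((2*(F:ℝ)+1) * M))) :=
          mul_le_mul_of_nonneg_left hsum (by positivity)
      _ = (D / (F:ℝ)^(p+1) * ((2*(F:ℝ)+1) * M)) * (2*π) := by
          field_simp
  calc ‖(∫ x in (-π)..π, (f x - S x) * G x) -
          (2 * (π : ℂ) / (2 * F)) * ∑ j ∈ Finset.range (2 * F),
            (f (node j) - S (node j)) * G (node j)‖
      ≤ ‖∫ x in (-π)..π, (f x - S x) * G x‖ +
        ‖(2 * (π : ℂ) / (2 * F)) * ∑ j ∈ Finset.range (2 * F),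
            (f (node j) - S (node j)) * G (node j)‖ := norm_sub_le _ _
    _ ≤ (D / (F:ℝ)^(p+1) * ((2*(F:ℝ)+1) * M)) * (2*π)
        + (D / (F:ℝ)^(p+1) * ((2*(F:ℝ)+1) * M)) * (2*π) := add_le_add hI hQ
    _ ≤ (12*π*M*D) / (F:ℝ)^p := by
        have h1 : (2*(F:ℝ)+1) ≤ 3*(F:ℝ) := by
          have : (1:ℝ) ≤ (F:ℝ) := by exact_mod_cast hF
          linarith
        have e1 : D / (F:ℝ)^(p+1) * ((2*(F:ℝ)+1) * M) * (2*π)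
              + D / (F:ℝ)^(p+1) * ((2*(F:ℝ)+1) * M) * (2*π)
            = 4*π*(M*D*(2*(F:ℝ)+1)) / ((F:ℝ)^p * (F:ℝ)) := by
          rw [pow_succ]
          field_simp
          ring
        rw [e1, div_le_div_iff₀ (by positivity) (by positivity)]
        nlinarith [mul_le_mul_of_nonneg_left h1
          (show (0:ℝ) ≤ 4*π*M*D*(F:ℝ)^p by positivity)]
    _ ≤ (12*π*M*D + 1) / (F:ℝ)^p := by
        exact (div_le_div_iff_of_pos_right (show (0:ℝ) < (F:ℝ)^p by positivity)).mpr (by linarith)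
end

section
/- Let p be a natural number, M > 0, C_b > 0, and let a : ℤ×ℤ → ℂ satisfy |a_{j,k}| ≤ M for all (j,k), and b : ℤ×ℤ → ℂ satisfy |b_{j,k}| ≤ C_b · (1 + max(|j|,|k|))^{-(p+4)} for all (j,k). Then there exists a constant C₁ > 0 such that for every positive integer F and all integers m, n with |m| ≤ F and |n| ≤ F, | Σ_{|j|≤F, |k|≤F, max(|m−j|,|n−k|)>F} a_{j,k} · b_{m−j, n−k} | ≤ C₁ · F^{-(p+2)}. -/
/-!
Every index in the sum has `max |m - j| |n - k| > F`, so each term is at most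
`M · C_b / F^(p+4)` by the decay of `b`, while there are at most `(2F+1)² ≤ 9F²` terms.
-/

open Finset

lemma card_Icc_neg_prod_Icc_neg_le (F : ℕ) (hF : 0 < F) :
    (#(Icc (-(F : ℤ)) F ×ˢ Icc (-(F : ℤ)) F) : ℝ) ≤ 9 * (F : ℝ) ^ 2 := by
  have hcard : #(Icc (-(F : ℤ)) F) = 2 * F + 1 := by
    rw [Int.card_Icc]
    omega
  have hF1 : (1 : ℝ) ≤ F := by exact_mod_cast hF
  rw [card_product, hcard]
  push_cast
  nlinarith

lemma norm_le_div_pow_of_lt_max {E : Type*} [Norm E] {b : ℤ × ℤ → E} {C : ℝ} {q : ℕ}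
    (hC : 0 ≤ C) (hb : ∀ jk : ℤ × ℤ, ‖b jk‖ ≤ C / (1 + ((max |jk.1| |jk.2| : ℤ) : ℝ)) ^ q)
    {F : ℕ} (hF : 0 < F) {jk : ℤ × ℤ} (hjk : (F : ℤ) < max |jk.1| |jk.2|) :
    ‖b jk‖ ≤ C / (F : ℝ) ^ q := by
  have hlt : (F : ℝ) < ((max |jk.1| |jk.2| : ℤ) : ℝ) := by exact_mod_cast hjk
  refine (hb jk).trans ?_
  gcongr
  linarith

/-- Truncated-convolution tail estimate: if `|a_{j,k}| ≤ M` and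
`|b_{j,k}| ≤ C_b (1 + max(|j|,|k|))^{-(p+4)}`, then there is `C₁ > 0` such that for
every positive integer `F` and all `|m| ≤ F`, `|n| ≤ F`,
`|∑_{|j|≤F, |k|≤F, max(|m−j|,|n−k|)>F} a_{j,k} b_{m−j,n−k}| ≤ C₁ F^{-(p+2)}`. -/
theorem stmt7 (p : ℕ) (M Cb : ℝ) (hM : 0 < M) (hCb : 0 < Cb)
    (a b : ℤ × ℤ → ℂ)
    (ha : ∀ jk : ℤ × ℤ, ‖a jk‖ ≤ M)
    (hb : ∀ jk : ℤ × ℤ,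
      ‖b jk‖ ≤ Cb / (1 + ((max |jk.1| |jk.2| : ℤ) : ℝ)) ^ (p + 4)) :
    ∃ C₁ > 0, ∀ F : ℕ, 0 < F → ∀ m n : ℤ, |m| ≤ (F : ℤ) → |n| ≤ (F : ℤ) →
      ‖∑ jk ∈ (Finset.Icc (-(F : ℤ)) (F : ℤ) ×ˢ Finset.Icc (-(F : ℤ)) (F : ℤ)).filter
            (fun jk => (F : ℤ) < max |m - jk.1| |n - jk.2|),
          a jk * b (m - jk.1, n - jk.2)‖
        ≤ C₁ / (F : ℝ) ^ (p + 2) := by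
  refine ⟨9 * M * Cb, by positivity, fun F hF m n _ _ => ?_⟩
  set S := (Icc (-(F : ℤ)) F ×ˢ Icc (-(F : ℤ)) F).filter
    (fun jk => (F : ℤ) < max |m - jk.1| |n - jk.2|)
  have hterm : ∀ jk ∈ S, ‖a jk * b (m - jk.1, n - jk.2)‖ ≤ M * (Cb / (F : ℝ) ^ (p + 4)) :=
    fun jk hjk => (norm_mul_le _ _).trans <| mul_le_mul (ha jk)
      (norm_le_div_pow_of_lt_max hCb.le hb hF (mem_filter.1 hjk).2) (norm_nonneg _) hM.le
  have hcard : (#S : ℝ) ≤ 9 * (F : ℝ) ^ 2 :=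
    (Nat.cast_le.2 (card_filter_le _ _)).trans (card_Icc_neg_prod_Icc_neg_le F hF)
  have hFpos : (0 : ℝ) < F := by exact_mod_cast hF
  calc _ ≤ #S * (M * (Cb / (F : ℝ) ^ (p + 4))) := by
        simpa only [sum_const, nsmul_eq_mul] using norm_sum_le_of_le S hterm
    _ ≤ 9 * (F : ℝ) ^ 2 * (M * (Cb / (F : ℝ) ^ (p + 4))) := by gcongr
    _ = 9 * M * Cb / (F : ℝ) ^ (p + 2) := by
        field_simp
        ring
end

section
/- Let p be a natural number, M > 0, C_b > 0, C_g > 0, and let a : ℤ×ℤ → ℂ satisfy |a_{j,k}| ≤ M for all (j,k); let b : ℤ×ℤ → ℂ be absolutely summable, Σ_{(j,k)∈ℤ²} |b_{j,k}| < ∞; and let g : ℤ×ℤ → ℂ satisfy |g_{m,n}| ≤ C_g · (1 + max(|m|,|n|))^{-(p+3)} for all (m,n). For a positive integer F define f̃^F_{m,n} := Σ_{|j|≤F, |k|≤F} a_{j,k} · b_{m−j, n−k}. Then there exists a constant C > 0 such that for all positive integers F, | Σ_{(m,n)∈ℤ², max(|m|,|n|)>F} f̃^F_{m,n} · g_{m,n}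 | ≤ C · F^{-p}. -/
/-!
The truncated convolution is bounded by `M ∑ |b|` uniformly in `F` and `(m, n)`. On the tail
`max(|m|, |n|) > F` the kernel bound `(1 + t)^{-(p+3)} ≤ F^{-p} t^{-3}` pays for the factor
`F^{-p}` and still leaves the weight `max(|m|, |n|)^{-3}`, which is summable over `ℤ²`.
-/

open Finset

lemma norm_sum_mul_sub_le_mul_tsum {G R : Type*} [AddGroup G] [NonUnitalSeminormedRing R]
    {a b : G → R} {M : ℝ} (ha : ∀ j, ‖a j‖ ≤ M) (hb : Summable fun y => ‖b y‖)
    (s : Finset G) (x : G) :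
    ‖∑ j ∈ s, a j * b (x - j)‖ ≤ M * ∑' y, ‖b y‖ := by
  have hM : 0 ≤ M := (norm_nonneg _).trans (ha 0)
  have hbx : Summable fun j => ‖b (x - j)‖ := (Equiv.subLeft x).summable_iff.mpr hb
  calc ‖∑ j ∈ s, a j * b (x - j)‖
      ≤ ∑ j ∈ s, ‖a j‖ * ‖b (x - j)‖ := norm_sum_le_of_le s fun j _ => norm_mul_le _ _
    _ ≤ ∑ j ∈ s, M * ‖b (x - j)‖ :=
        sum_le_sum fun j _ => mul_le_mul_of_nonneg_right (ha j) (norm_nonneg _)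
    _ = M * ∑ j ∈ s, ‖b (x - j)‖ := (mul_sum _ _ _).symm
    _ ≤ M * ∑' j, ‖b (x - j)‖ :=
        mul_le_mul_of_nonneg_left (hbx.sum_le_tsum s fun _ _ => norm_nonneg _) hM
    _ = M * ∑' y, ‖b y‖ := congrArg (M * ·) ((Equiv.subLeft x).tsum_eq fun y => ‖b y‖)

lemma Int.norm_prod_eq_max_abs (x : ℤ × ℤ) : ‖x‖ = ((max |x.1| |x.2| : ℤ) : ℝ) := by
  simp [Prod.norm_def, Int.norm_eq_abs]

lemma Int.summable_prod_norm_rpow_neg {k : ℝ} (hk : 2 < k) :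
    Summable fun x : ℤ × ℤ => ‖x‖ ^ (-k) := by
  rw [← (finTwoArrowEquiv ℤ).summable_iff]
  convert EisensteinSeries.summable_one_div_norm_rpow hk using 2 with x
  simp [Prod.norm_def, EisensteinSeries.norm_eq_max_natAbs, Int.norm_eq_abs]

lemma div_one_add_pow_add_three_le {C F t : ℝ} (hC : 0 ≤ C) (hF : 0 < F) (hFt : F ≤ t) (p : ℕ) :
    C / (1 + t) ^ (p + 3) ≤ C / F ^ p * t ^ (-3 : ℝ) := by
  have ht : 0 < t := hF.trans_le hFt
  rw [Real.rpow_neg ht.le, Real.rpow_ofNat, ← div_eq_mul_inv, div_div, pow_add]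
  gcongr <;> linarith

lemma norm_tsum_mul_le_of_tail {R : Type*} [NonUnitalSeminormedRing R] {f g : ℤ × ℤ → R}
    {A Cg F : ℝ} {p : ℕ} (hf : ∀ x, ‖f x‖ ≤ A)
    (hg : ∀ x, ‖g x‖ ≤ Cg / (1 + ‖x‖) ^ (p + 3)) (hF : 0 < F) {S : Set (ℤ × ℤ)}
    (hS : ∀ x ∈ S, F < ‖x‖) :
    ‖∑' x : S, f x * g x‖ ≤ A * Cg * (∑' x : ℤ × ℤ, ‖x‖ ^ (-3 : ℝ)) / F ^ p := by
  have hA : 0 ≤ A := (norm_nonneg _).trans (hf 0)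
  have hCg : 0 ≤ Cg := by simpa using (norm_nonneg _).trans (hg 0)
  have hw := Int.summable_prod_norm_rpow_neg (k := 3) (by norm_num)
  have hpoint : ∀ x : S, ‖f x * g x‖ ≤ A * Cg / F ^ p * ‖(x : ℤ × ℤ)‖ ^ (-3 : ℝ) := by
    rintro ⟨x, hx⟩
    calc ‖f x * g x‖ ≤ ‖f x‖ * ‖g x‖ := norm_mul_le _ _
      _ ≤ A * (Cg / F ^ p * ‖x‖ ^ (-3 : ℝ)) :=
          mul_le_mul (hf x) ((hg x).trans (div_one_add_pow_add_three_le hCg hF (hS x hx).le p))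
            (norm_nonneg _) hA
      _ = A * Cg / F ^ p * ‖x‖ ^ (-3 : ℝ) := by ring
  calc ‖∑' x : S, f x * g x‖
      ≤ ∑' x : S, A * Cg / F ^ p * ‖(x : ℤ × ℤ)‖ ^ (-3 : ℝ) :=
        tsum_of_norm_bounded ((hw.subtype S).mul_left _).hasSum hpoint
    _ = A * Cg / F ^ p * ∑' x : S, ‖(x : ℤ × ℤ)‖ ^ (-3 : ℝ) := tsum_mul_left
    _ ≤ A * Cg / F ^ p * ∑' x : ℤ × ℤ, ‖x‖ ^ (-3 : ℝ) := by
        gcongr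
        exact hw.tsum_subtype_le _ S fun x => by positivity
    _ = A * Cg * (∑' x : ℤ × ℤ, ‖x‖ ^ (-3 : ℝ)) / F ^ p := by ring

theorem stmt8_general (p : ℕ) (M Cg : ℝ)
    (a b g : ℤ × ℤ → ℂ)
    (ha : ∀ jk : ℤ × ℤ, ‖a jk‖ ≤ M)
    (hb : Summable fun jk : ℤ × ℤ => ‖b jk‖)
    (hg : ∀ mn : ℤ × ℤ,
      ‖g mn‖ ≤ Cg / (1 + ((max |mn.1| |mn.2| : ℤ) : ℝ)) ^ (p + 3)) :
    ∃ C > 0, ∀ F : ℕ, 0 < F →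
      ‖∑' mn : {mn : ℤ × ℤ // (F : ℤ) < max |mn.1| |mn.2|},
          (∑ jk ∈ Finset.Icc (-(F : ℤ)) (F : ℤ) ×ˢ Finset.Icc (-(F : ℤ)) (F : ℤ),
              a jk * b ((mn : ℤ × ℤ).1 - jk.1, (mn : ℤ × ℤ).2 - jk.2)) *
            g (mn : ℤ × ℤ)‖
        ≤ C / (F : ℝ) ^ p := by
  set K := M * (∑' jk, ‖b jk‖) * Cg * ∑' x : ℤ × ℤ, ‖x‖ ^ (-3 : ℝ)
  refine ⟨max K 1, lt_max_of_lt_right one_pos, fun F hF => ?_⟩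
  set s := Finset.Icc (-(F : ℤ)) (F : ℤ) ×ˢ Finset.Icc (-(F : ℤ)) (F : ℤ)
  calc _ ≤ K / (F : ℝ) ^ p :=
        norm_tsum_mul_le_of_tail (S := {mn | (F : ℤ) < max |mn.1| |mn.2|})
          (f := fun mn => ∑ jk ∈ s, a jk * b (mn.1 - jk.1, mn.2 - jk.2))
          (fun mn => norm_sum_mul_sub_le_mul_tsum ha hb s mn)
          (fun mn => Int.norm_prod_eq_max_abs mn ▸ hg mn) (by positivity)
          fun mn hmn => by rw [Int.norm_prod_eq_max_abs]; exact_mod_cast hmn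
    _ ≤ max K 1 / (F : ℝ) ^ p := by gcongr; exact le_max_left _ _

/-- Tail estimate for the truncated convolution against a decaying kernel:
with `|a_{j,k}| ≤ M`, `b` absolutely summable, and
`|g_{m,n}| ≤ C_g (1 + max(|m|,|n|))^{-(p+3)}`, setting
`f̃^F_{m,n} = ∑_{|j|≤F,|k|≤F} a_{j,k} b_{m−j,n−k}`, there is `C > 0` such that
`|∑_{max(|m|,|n|)>F} f̃^F_{m,n} g_{m,n}| ≤ C F^{-p}` for all positive integers `F`. -/
theorem stmt8 (p : ℕ) (M Cb Cg : ℝ) (hM : 0 < M) (hCb : 0 < Cb) (hCg : 0 < Cg)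
    (a b g : ℤ × ℤ → ℂ)
    (ha : ∀ jk : ℤ × ℤ, ‖a jk‖ ≤ M)
    (hb : Summable fun jk : ℤ × ℤ => ‖b jk‖)
    (hg : ∀ mn : ℤ × ℤ,
      ‖g mn‖ ≤ Cg / (1 + ((max |mn.1| |mn.2| : ℤ) : ℝ)) ^ (p + 3)) :
    ∃ C > 0, ∀ F : ℕ, 0 < F →
      ‖∑' mn : {mn : ℤ × ℤ // (F : ℤ) < max |mn.1| |mn.2|},
          (∑ jk ∈ Finset.Icc (-(F : ℤ)) (F : ℤ) ×ˢ Finset.Icc (-(F : ℤ)) (F : ℤ),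
              a jk * b ((mn : ℤ × ℤ).1 - jk.1, (mn : ℤ × ℤ).2 - jk.2)) *
            g (mn : ℤ × ℤ)‖
        ≤ C / (F : ℝ) ^ p :=
  stmt8_general p M Cg a b g ha hb hg
end
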